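/- Let n ≥ 2 and 1 ≤ a ≤ n−1, and let α, α' lie in the submonoid of B_n generated by σ_{a+1},…,σ_{n−1}. Then tr_n^0(ασ_aα') = z·tr_n^0(αα'). Consequently (the values in question lying in ℤ[q,z]), the evaluation at z = 0 of tr_n^0(ασ_aα') is 0, and the evaluation at z = 0 of tr_n^0(ασ_a²α') equals q times the evaluation at z = 0 of tr_n^0(αα'). -/

import Mathlib

noncomputable section
open scoped Classical

/-- `𝕂 = ℂ(q)`. -/
abbrev K : Type := RatFunc ℂ
/-- `𝕂(z)`. -/
abbrev Kz : Type := RatFunc K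
/-- the variable `q`. -/
def q : K := RatFunc.X
/-- the variable `z`. -/
def z : Kz := RatFunc.X

/-- The braid relations, as elements of the free group on `σ_1, …, σ_{n-1}`
(0-indexed `i ↔ σ_{i+1}`). -/
def braidRels (n : ℕ) : Set (FreeGroup (Fin (n - 1))) :=
  {r | (∃ i j : Fin (n - 1), ((i : ℕ) + 1 = (j : ℕ) ∨ (j : ℕ) + 1 = (i : ℕ)) ∧
          r = FreeGroup.of i * FreeGroup.of j * FreeGroup.of i *
              (FreeGroup.of j * FreeGroup.of i * FreeGroup.of j)⁻¹) ∨
       (∃ i j : Fin (n - 1), ((i : ℕ) + 2 ≤ (j : ℕ) ∨ (j : ℕ) + 2 ≤ (i : ℕ)) ∧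
          r = FreeGroup.of i * FreeGroup.of j * (FreeGroup.of j * FreeGroup.of i)⁻¹)}

/-- The braid group `B_n` on `n` strands. -/
def BG (n : ℕ) : Type := PresentedGroup (braidRels n)

instance (n : ℕ) : Group (BG n) := inferInstanceAs (Group (PresentedGroup _))

/-- The standard generator `σ_{i+1}` of the braid group. -/
def bgen {n : ℕ} (i : Fin (n - 1)) : BG n := PresentedGroup.of i

lemma bgen_braid {m : ℕ} (i j : Fin (m - 1)) (h : (i : ℕ) + 1 = (j : ℕ) ∨ (j : ℕ) + 1 = (i : ℕ)) :
    bgen (n := m) i * bgen j * bgen i = bgen j * bgen i * bgen j := by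
  have key : PresentedGroup.mk (braidRels m)
      (FreeGroup.of i * FreeGroup.of j * FreeGroup.of i *
        (FreeGroup.of j * FreeGroup.of i * FreeGroup.of j)⁻¹) = 1 :=
    (QuotientGroup.eq_one_iff _).mpr (Subgroup.subset_normalClosure (Or.inl ⟨i, j, h, rfl⟩))
  rw [map_mul, map_inv, mul_inv_eq_one] at key
  exact key

lemma bgen_comm {m : ℕ} (i j : Fin (m - 1)) (h : (i : ℕ) + 2 ≤ (j : ℕ) ∨ (j : ℕ) + 2 ≤ (i : ℕ)) :
    bgen (n := m) i * bgen j = bgen j * bgen i := by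
  have key : PresentedGroup.mk (braidRels m)
      (FreeGroup.of i * FreeGroup.of j * (FreeGroup.of j * FreeGroup.of i)⁻¹) = 1 :=
    (QuotientGroup.eq_one_iff _).mpr (Subgroup.subset_normalClosure (Or.inr ⟨i, j, h, rfl⟩))
  rw [map_mul, map_inv, mul_inv_eq_one] at key
  exact key

/-- The standard inclusion `B_n → B_{n+1}`. -/
def inclB {n : ℕ} : BG n →* BG (n + 1) :=
  PresentedGroup.toGroup (f := fun i : Fin (n - 1) => bgen (Fin.castLE (by omega) i))
    (by
      rintro r (⟨i, j, hij, rfl⟩ | ⟨i, j, hij, rfl⟩) <;>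
        simp only [map_mul, map_inv, FreeGroup.lift_apply_of, mul_inv_eq_one]
      · exact bgen_braid _ _ (by simpa using hij)
      · exact bgen_comm _ _ (by simpa using hij))

/-- The positive braid monoid `B_n⁺`, the submonoid of `B_n` generated by the `σ_i`. -/
def Bplus (n : ℕ) : Submonoid (BG n) := Submonoid.closure (Set.range (bgen (n := n)))

/-- The monoid algebra `𝕂[B_n]`. -/
abbrev MAB (n : ℕ) : Type := MonoidAlgebra K (BG n)

/-- The Hecke relations `σ_k² = (q-1)σ_k + q`. -/
def hrelB (n : ℕ) : MAB n → MAB n → Prop := fun x y =>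
  ∃ i : Fin (n - 1), x = (MonoidAlgebra.of K (BG n) (bgen i)) ^ 2 ∧
    y = (q - 1) • MonoidAlgebra.of K (BG n) (bgen i) + q • 1

/-- The Hecke algebra `H(B_n)` of the braid group / symmetric group. -/
def HB (n : ℕ) : Type := RingQuot (hrelB n)

instance (n : ℕ) : Ring (HB n) := inferInstanceAs (Ring (RingQuot (hrelB n)))
instance (n : ℕ) : Algebra K (HB n) := inferInstanceAs (Algebra K (RingQuot (hrelB n)))

/-- The natural map `B_n → H(B_n)`. -/
def ιHB {n : ℕ} (β : BG n) : HB n := RingQuot.mkAlgHom K (hrelB n) (MonoidAlgebra.of K (BG n) β)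

/-- The generator `σ_n` of `B_{n+2}` (0-indexed `n`), used in the Markov condition. -/
def lastGenB (n : ℕ) : Fin ((n + 2) - 1) := ⟨n, by omega⟩

/-- A collection of 𝕂-linear maps `H(B_n) → 𝕂(z)`, `n ≥ 1`
(index `n` in the collection corresponds to `n+1` strands). -/
abbrev TRBc : Type := ∀ n : ℕ, HB (n + 1) →ₗ[K] Kz

/-- The Markov trace conditions for the tower of Hecke algebras `{H(B_n)}ₙ`. -/
def IsMarkovB (T : TRBc) : Prop :=
  (∀ (n : ℕ) (α β : BG (n + 1)), T n (ιHB (α * β)) = T n (ιHB (β * α))) ∧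
  (∀ (n : ℕ) (β : BG (n + 1)), T (n + 1) (ιHB (inclB β)) = T n (ιHB β)) ∧
  (∀ (n : ℕ) (β : BG (n + 1)),
    T (n + 1) (ιHB (inclB β * bgen (lastGenB n))) = z * T n (ιHB β))

/-- The subring `ℤ[q] ⊆ 𝕂`. -/
def Zq : Subring K := Subring.closure {q}

/-- The subring `ℤ[q, z] ⊆ 𝕂(z)`. -/
def Rqz : Subring Kz := Subring.closure {algebraMap K Kz q, z}

/-- Evaluation at `z = 0` of a rational function in `z`. -/
def evalz0 : Kz → K := RatFunc.eval (RingHom.id K) 0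

/-!
Conjugation by the half twist `Δ` of `B_{m+1}` reverses its generators, `σ_i ↦ σ_{m+1-i}`, so
it turns `α σ_a α'` into `β σ_{m+1-a} β'` with `β, β'` words in `σ_1, …, σ_{m-a}`; a cyclic
permutation and the Markov property then produce the factor `z`. For the evaluations at `z = 0`,
the trace of a positive braid is a polynomial in `z`: by induction on the number of strands,
using the decomposition `H_{k+1} = H_k + H_k σ_{k+1} H_k` of Hecke algebras and the Markov property.
The Hecke relation `σ_a² = (q - 1) σ_a + q` reduces the last claim to the first.
-/

namespace BG

/-- `σ_{i+1}` indexed by a natural number; it is the junk value `1` when `n - 1 ≤ i`. -/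
def gen (n i : ℕ) : BG n := if h : i < n - 1 then bgen ⟨i, h⟩ else 1

lemma gen_of_lt {n i : ℕ} (h : i < n - 1) : gen n i = bgen ⟨i, h⟩ := dif_pos h

lemma gen_commute {n i j : ℕ} (h : i + 2 ≤ j ∨ j + 2 ≤ i) :
    Commute (gen n i) (gen n j) := by
  unfold gen
  split_ifs
  · exact bgen_comm _ _ h
  all_goals first | exact Commute.one_left _ | exact Commute.one_right _

lemma gen_braid {n i : ℕ} (h : i + 1 < n - 1) :
    gen n i * gen n (i + 1) * gen n i = gen n (i + 1) * gen n i * gen n (i + 1) := by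
  rw [gen_of_lt (by omega), gen_of_lt h]
  exact bgen_braid _ _ (Or.inl rfl)

lemma inclB_gen {n i : ℕ} (h : i < n - 1) : inclB (gen n i) = gen (n + 1) i := by
  rw [gen_of_lt h, gen_of_lt (by omega)]
  exact PresentedGroup.toGroup.of _

def word (n : ℕ) (l : List ℕ) : BG n := (l.map (gen n)).prod

@[simp] lemma word_nil {n : ℕ} : word n [] = 1 := rfl

@[simp] lemma word_cons {n : ℕ} (i : ℕ) (l : List ℕ) :
    word n (i :: l) = gen n i * word n l := by
  simp [word]

@[simp] lemma word_append {n : ℕ} (l l' : List ℕ) :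
    word n (l ++ l') = word n l * word n l' := by
  simp [word]

lemma gen_commute_word {n k : ℕ} {l : List ℕ} (h : ∀ j ∈ l, k + 2 ≤ j ∨ j + 2 ≤ k) :
    Commute (gen n k) (word n l) :=
  Commute.list_prod_right _ _ (List.forall_mem_map.2 fun j hj => gen_commute (h j hj))

lemma inclB_word {n : ℕ} {l : List ℕ} (hl : ∀ i ∈ l, i < n - 1) :
    inclB (word n l) = word (n + 1) l := by
  induction l with
  | nil => exact map_one _
  | cons i l ih =>
    simp only [List.forall_mem_cons] at hl
    rw [word_cons, map_mul, inclB_gen hl.1, ih hl.2, word_cons]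

lemma exists_word_of_mem_closure {n a : ℕ} {α : BG n}
    (hα : α ∈ Submonoid.closure
      {x : BG n | ∃ i : Fin (n - 1), a ≤ (i : ℕ) ∧ x = bgen i}) :
    ∃ l : List ℕ, (∀ i ∈ l, a ≤ i ∧ i < n - 1) ∧ word n l = α := by
  induction hα using Submonoid.closure_induction with
  | mem x hx =>
    obtain ⟨i, hi, rfl⟩ := hx
    exact ⟨[i], by simp [hi], by simp [gen_of_lt i.isLt]⟩
  | one => exact ⟨[], by simp, rfl⟩
  | mul x y _ _ ihx ihy =>
    obtain ⟨l, hl, rfl⟩ := ihx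
    obtain ⟨l', hl', rfl⟩ := ihy
    exact ⟨l ++ l', fun i hi => (List.mem_append.1 hi).elim (hl i) (hl' i), word_append l l'⟩

/-- `σ_1 σ_2 ⋯ σ_j`. -/
def ascWord (n j : ℕ) : BG n := word n (List.range j)

/-- `σ_j ⋯ σ_2 σ_1`. -/
def descWord (n j : ℕ) : BG n := word n (List.range j).reverse

/-- The half twist `Δ` of the first `j + 1` strands. -/
def garside (n : ℕ) : ℕ → BG n
  | 0 => 1
  | j + 1 => garside n j * descWord n (j + 1)

lemma ascWord_succ (n j : ℕ) : ascWord n (j + 1) = ascWord n j * gen n j := by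
  simp [ascWord, List.range_succ]

lemma descWord_succ (n j : ℕ) : descWord n (j + 1) = gen n j * descWord n j := by
  simp [descWord, List.range_succ]

lemma gen_commute_ascWord {n i j : ℕ} (h : j < i) : Commute (gen n i) (ascWord n j) :=
  gen_commute_word fun l hl => Or.inr (by rw [List.mem_range] at hl; omega)

lemma gen_commute_descWord {n i j : ℕ} (h : j < i) : Commute (gen n i) (descWord n j) :=
  gen_commute_word fun l hl => Or.inr (by rw [List.mem_reverse, List.mem_range] at hl; omega)

lemma gen_commute_garside {n i j : ℕ} (h : j < i) : Commute (gen n i) (garside n j) := by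
  induction j with
  | zero => exact Commute.one_right _
  | succ j ih => exact (ih (by omega)).mul_right (gen_commute_descWord h)

lemma ascWord_mul_gen {n i j : ℕ} (h : i + 2 ≤ j) (hj : j ≤ n - 1) :
    ascWord n j * gen n i = gen n (i + 1) * ascWord n j := by
  induction j, h using Nat.le_induction with
  | base =>
    rw [ascWord_succ, ascWord_succ, mul_assoc, mul_assoc, ← mul_assoc (gen n i),
      gen_braid (by omega), ← mul_assoc, ← mul_assoc, ← mul_assoc,
      ← (gen_commute_ascWord (by omega)).eq]
    simp only [mul_assoc]
  | succ j hij ih =>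
    rw [ascWord_succ, mul_assoc, (gen_commute (Or.inr hij)).eq, ← mul_assoc, ih (by omega),
      mul_assoc]

lemma descWord_mul_gen {n i j : ℕ} (h : i + 2 ≤ j) (hj : j ≤ n - 1) :
    descWord n j * gen n (i + 1) = gen n i * descWord n j := by
  induction j, h using Nat.le_induction with
  | base =>
    rw [descWord_succ, descWord_succ, mul_assoc, mul_assoc,
      ← (gen_commute_descWord (by omega)).eq, ← mul_assoc, ← mul_assoc,
      ← gen_braid (n := n) (i := i) (by omega)]
    simp only [mul_assoc]
  | succ j hij ih =>
    rw [descWord_succ, mul_assoc, ih (by omega), ← mul_assoc,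
      (gen_commute (Or.inr (by omega))).eq, mul_assoc]

lemma garside_succ (n j : ℕ) : garside n (j + 1) = ascWord n (j + 1) * garside n j := by
  induction j with
  | zero => simp [garside, ascWord, descWord]
  | succ j ih =>
    calc garside n (j + 2) = garside n (j + 1) * descWord n (j + 2) := rfl
      _ = ascWord n (j + 1) * garside n j * (gen n (j + 1) * descWord n (j + 1)) := by
        rw [ih, descWord_succ]
      _ = ascWord n (j + 1) * gen n (j + 1) * (garside n j * descWord n (j + 1)) := by
        rw [mul_assoc, ← mul_assoc (garside n j), ← (gen_commute_garside (by omega)).eq]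
        simp only [mul_assoc]
      _ = ascWord n (j + 2) * garside n (j + 1) := by rw [← ascWord_succ]; rfl

lemma garside_mul_gen {n j : ℕ} (hj : j ≤ n - 1) {i : ℕ} (h : i < j) :
    garside n j * gen n i = gen n (j - 1 - i) * garside n j := by
  induction j generalizing i with
  | zero => omega
  | succ j ih =>
    rcases i with _ | i
    · rcases Nat.eq_zero_or_pos j with rfl | hj0
      · simp [garside, descWord]
      rw [garside_succ, mul_assoc, ih (by omega) hj0, ← mul_assoc,
        ascWord_mul_gen (by omega) hj, mul_assoc, ← garside_succ]
      congr 2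
      omega
    · rw [garside, mul_assoc, descWord_mul_gen (by omega) hj, ← mul_assoc,
        ih (by omega) (by omega), mul_assoc]
      congr 2
      omega

lemma garside_mul_word {n j : ℕ} (hj : j ≤ n - 1) {l : List ℕ} (hl : ∀ i ∈ l, i < j) :
    garside n j * word n l = word n (l.map (j - 1 - ·)) * garside n j := by
  induction l with
  | nil => simp
  | cons i l ih =>
    simp only [List.forall_mem_cons] at hl
    rw [word_cons, ← mul_assoc, garside_mul_gen hj hl.1, mul_assoc, ih hl.2, List.map_cons,
      word_cons, mul_assoc]

end BG

open BG

lemma ιHB_mul {n : ℕ} (x y : BG n) : ιHB (x * y) = ιHB x * ιHB y := by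
  simp only [ιHB, map_mul]
  rfl

lemma ιHB_gen_mul_gen {n i : ℕ} (h : i < n - 1) :
    ιHB (gen n i) * ιHB (gen n i) = (q - 1) • ιHB (gen n i) + q • 1 := by
  have hecke : hrelB n (MonoidAlgebra.of K (BG n) (gen n i) ^ 2)
      ((q - 1) • MonoidAlgebra.of K (BG n) (gen n i) + q • 1) :=
    ⟨⟨i, h⟩, by rw [gen_of_lt h], by rw [gen_of_lt h]⟩
  have hsq := RingQuot.mkAlgHom_rel K hecke
  simp only [pow_two, map_mul, map_add, map_smul, map_one] at hsq
  exact hsq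

lemma ιHB_mul_gen_mul_gen_mul {n i : ℕ} (h : i < n - 1) (x y : BG n) :
    ιHB (x * (gen n i * gen n i) * y)
      = (q - 1) • ιHB (x * gen n i * y) + q • ιHB (x * y) := by
  simp only [ιHB_mul, ιHB_gen_mul_gen h, mul_add, add_mul, mul_smul_comm, smul_mul_assoc, mul_one]

namespace IsMarkovB

variable {T : TRBc}

lemma trace_mul_comm (hT : IsMarkovB T) {N : ℕ} (x y : BG (N + 1)) :
    T N (ιHB (x * y)) = T N (ιHB (y * x)) :=
  hT.1 N x y

lemma trace_conj (hT : IsMarkovB T) {N : ℕ} (g x : BG (N + 1)) :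
    T N (ιHB (g * x * g⁻¹)) = T N (ιHB x) := by
  rw [mul_assoc, hT.trace_mul_comm, inv_mul_cancel_right]

lemma trace_word_of_le (hT : IsMarkovB T) {k N : ℕ} {l : List ℕ} (hl : ∀ i ∈ l, i < k)
    (hkN : k ≤ N) : T N (ιHB (word (N + 1) l)) = T k (ιHB (word (k + 1) l)) := by
  induction N, hkN using Nat.le_induction with
  | base => rfl
  | succ N hkN ih =>
    rw [← ih, ← inclB_word fun i hi => by have := hl i hi; omega, hT.2.1]

lemma trace_word_append_gen (hT : IsMarkovB T) {k N : ℕ} {l : List ℕ} (hl : ∀ i ∈ l, i < k)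
    (hkN : k < N) : T N (ιHB (word (N + 1) (l ++ [k]))) = z * T N (ιHB (word (N + 1) l)) := by
  have hlk : ∀ i ∈ l ++ [k], i < k + 1 := by
    intro i hi
    rcases List.mem_append.1 hi with hi | hi
    · exact (hl i hi).trans k.lt_succ_self
    · rw [List.mem_singleton.1 hi]; exact k.lt_succ_self
  have hmarkov := hT.2.2 k (word (k + 1) l)
  rw [lastGenB, ← gen_of_lt, inclB_word fun i hi => by have := hl i hi; omega] at hmarkov
  rw [hT.trace_word_of_le hlk hkN, hT.trace_word_of_le hl hkN.le, word_append, word_cons, word_nil,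
    mul_one, hmarkov]

lemma trace_word_append_comm (hT : IsMarkovB T) {N : ℕ} (l l' : List ℕ) :
    T N (ιHB (word (N + 1) (l ++ l'))) = T N (ιHB (word (N + 1) (l' ++ l))) := by
  rw [word_append, word_append, hT.trace_mul_comm]

lemma trace_word_map_reflect (hT : IsMarkovB T) {N : ℕ} {l : List ℕ} (hl : ∀ i ∈ l, i < N) :
    T N (ιHB (word (N + 1) (l.map (N - 1 - ·)))) = T N (ιHB (word (N + 1) l)) := by
  have hΔ := garside_mul_word (n := N + 1) (j := N) (by omega) hl
  rw [eq_mul_inv_of_mul_eq hΔ.symm, hT.trace_conj]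

/-- Reflecting by `Δ` turns `σ_a` into the last generator of a braid group containing the
reflected `α, α'`. -/
theorem trace_word_mul_gen_mul_word (hT : IsMarkovB T) {m a : ℕ} (ha : 1 ≤ a) (ham : a ≤ m)
    {l l' : List ℕ} (hl : ∀ i ∈ l, a ≤ i ∧ i < m)
    (hl' : ∀ i ∈ l', a ≤ i ∧ i < m) :
    T m (ιHB (word (m + 1) l * gen (m + 1) (a - 1) * word (m + 1) l'))
      = z * T m (ιHB (word (m + 1) l * word (m + 1) l')) := by
  set r : List ℕ → List ℕ := List.map (m - 1 - ·)
  have hbound : ∀ i ∈ r l' ++ r l, i < m - a := by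
    simp only [r, List.mem_append, List.mem_map]
    rintro _ (⟨i, hi, rfl⟩ | ⟨i, hi, rfl⟩)
    · have := hl' i hi; omega
    · have := hl i hi; omega
  have hlm : ∀ i ∈ l ++ l', i < m := fun i hi =>
    ((List.mem_append.1 hi).elim (hl i) (hl' i)).2
  have hlam : ∀ i ∈ l ++ (a - 1) :: l', i < m := by
    simp only [List.mem_append, List.mem_cons]
    rintro i (hi | rfl | hi)
    exacts [(hl i hi).2, by omega, (hl' i hi).2]
  calc T m (ιHB (word (m + 1) l * gen (m + 1) (a - 1) * word (m + 1) l'))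
      = T m (ιHB (word (m + 1) (r (l ++ (a - 1) :: l')))) := by
        rw [hT.trace_word_map_reflect hlam]; simp [mul_assoc]
    _ = T m (ιHB (word (m + 1) (r l' ++ r l ++ [m - a]))) := by
        rw [show r (l ++ (a - 1) :: l') = (r l ++ [m - a]) ++ r l' by
          simp only [r, List.map_append, List.map_cons, List.append_assoc, List.cons_append,
            List.nil_append]
          congr 2
          omega,
          hT.trace_word_append_comm, List.append_assoc]
    _ = z * T m (ιHB (word (m + 1) (r (l ++ l')))) := by
        rw [hT.trace_word_append_gen hbound (by omega), hT.trace_word_append_comm,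
          show r (l ++ l') = r l ++ r l' from List.map_append]
    _ = z * T m (ιHB (word (m + 1) l * word (m + 1) l')) := by
        rw [hT.trace_word_map_reflect hlm, word_append]

end IsMarkovB

section HeckeSpan

variable (N k : ℕ)

def lowWords : Set (HB (N + 1)) :=
  {x | ∃ u : List ℕ, (∀ i ∈ u, i < k) ∧ ιHB (word (N + 1) u) = x}

def midWords : Set (HB (N + 1)) :=
  {x | ∃ u v : List ℕ, (∀ i ∈ u, i < k) ∧ (∀ i ∈ v, i < k) ∧
    ιHB (word (N + 1) (u ++ k :: v)) = x}

/-- `H_k + H_k σ_{k+1} H_k` inside `H(B_{N+1})`, where `H_k` is spanned by the words in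
`σ_1, …, σ_k` (the letters `< k`). -/
def heckeSpan : Submodule K (HB (N + 1)) := Submodule.span K (lowWords N k ∪ midWords N k)

variable {N k}

lemma word_mem_heckeSpan_of_lt {u : List ℕ} (hu : ∀ i ∈ u, i < k) :
    ιHB (word (N + 1) u) ∈ heckeSpan N k :=
  Submodule.subset_span (Or.inl ⟨u, hu, rfl⟩)

lemma word_append_cons_mem_heckeSpan {u v : List ℕ} (hu : ∀ i ∈ u, i < k)
    (hv : ∀ i ∈ v, i < k) :
    ιHB (word (N + 1) (u ++ k :: v)) ∈ heckeSpan N k :=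
  Submodule.subset_span (Or.inr ⟨u, v, hu, hv, rfl⟩)

lemma word_mul_mem_heckeSpan {u : List ℕ} (hu : ∀ i ∈ u, i < k) {x : HB (N + 1)}
    (hx : x ∈ heckeSpan N k) : ιHB (word (N + 1) u) * x ∈ heckeSpan N k := by
  refine (Submodule.span_le
    (p := (heckeSpan N k).comap (LinearMap.mulLeft K (ιHB (word (N + 1) u))))).2 ?_ hx
  rintro _ (⟨v, hv, rfl⟩ | ⟨v, w, hv, hw, rfl⟩) <;>
    simp only [SetLike.mem_coe, Submodule.mem_comap, LinearMap.mulLeft_apply, ← ιHB_mul,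
      ← word_append]
  · exact word_mem_heckeSpan_of_lt (List.forall_mem_append.2 ⟨hu, hv⟩)
  · rw [← List.append_assoc]
    exact word_append_cons_mem_heckeSpan (List.forall_mem_append.2 ⟨hu, hv⟩) hw

lemma mul_gen_mem_heckeSpan_of_lt {i : ℕ} (hi : i < k) {x : HB (N + 1)}
    (hx : x ∈ heckeSpan N k) : x * ιHB (gen (N + 1) i) ∈ heckeSpan N k := by
  refine (Submodule.span_le
    (p := (heckeSpan N k).comap (LinearMap.mulRight K (ιHB (gen (N + 1) i))))).2 ?_ hx
  have hword : ∀ u, word (N + 1) u * gen (N + 1) i = word (N + 1) (u ++ [i]) := by simp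
  rintro _ (⟨u, hu, rfl⟩ | ⟨u, v, hu, hv, rfl⟩) <;>
    simp only [SetLike.mem_coe, Submodule.mem_comap, LinearMap.mulRight_apply, ← ιHB_mul, hword]
  · exact word_mem_heckeSpan_of_lt (List.forall_mem_append.2 ⟨hu, by simpa using hi⟩)
  · rw [List.append_assoc, List.cons_append]
    exact word_append_cons_mem_heckeSpan hu (List.forall_mem_append.2 ⟨hv, by simpa using hi⟩)

lemma gen_mul_word_mul_gen_mem_heckeSpan (hk : k < N) {u : List ℕ} (hu : ∀ i ∈ u, i + 1 < k) :
    ιHB (gen (N + 1) k) * ιHB (word (N + 1) u) * ιHB (gen (N + 1) k) ∈ heckeSpan N k := by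
  have hcomm := gen_commute_word (n := N + 1) (k := k) fun j hj =>
    Or.inr (by have := hu j hj; omega)
  have hu' : ∀ i ∈ u, i < k := fun i hi => by have := hu i hi; omega
  rw [← ιHB_mul, ← ιHB_mul, hcomm.eq, mul_assoc, ← mul_one (word _ u * _),
    ιHB_mul_gen_mul_gen_mul (by omega), mul_one, mul_one]
  refine add_mem (Submodule.smul_mem _ _ ?_) (Submodule.smul_mem _ _ ?_)
  · simpa using word_append_cons_mem_heckeSpan (N := N) hu' (v := []) (by simp)
  · exact word_mem_heckeSpan_of_lt hu'

lemma gen_mul_mem_mul_gen_mem_heckeSpan (hk : k + 1 < N) {x : HB (N + 1)}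
    (hx : x ∈ heckeSpan N k) :
    ιHB (gen (N + 1) (k + 1)) * x * ιHB (gen (N + 1) (k + 1)) ∈ heckeSpan N (k + 1) := by
  refine (Submodule.span_le (p := (heckeSpan N (k + 1)).comap
    (LinearMap.mulLeftRight K (ιHB (gen (N + 1) (k + 1)), ιHB (gen (N + 1) (k + 1)))))).2 ?_ hx
  rintro _ (⟨u, hu, rfl⟩ | ⟨u, v, hu, hv, rfl⟩) <;>
    simp only [SetLike.mem_coe, Submodule.mem_comap, LinearMap.mulLeftRight_apply]
  · exact gen_mul_word_mul_gen_mem_heckeSpan hk fun i hi => by have := hu i hi; omega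
  · have hcomm : ∀ w : List ℕ, (∀ i ∈ w, i < k) →
        Commute (gen (N + 1) (k + 1)) (word (N + 1) w) := fun w hw =>
      gen_commute_word fun j hj => Or.inr (by have := hw j hj; omega)
    -- the two outer `σ_{k+2}` meet `σ_{k+1}` and the braid relation leaves only one of them
    have hbraid : gen (N + 1) (k + 1) * word (N + 1) (u ++ k :: v) * gen (N + 1) (k + 1)
        = word (N + 1) ((u ++ [k]) ++ (k + 1) :: k :: v) := by
      simp only [word_append, word_cons, word_nil, mul_one, mul_assoc]
      rw [← mul_assoc, (hcomm u hu).eq, ← (hcomm v hv).eq]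
      simp only [← mul_assoc]
      rw [mul_assoc (word (N + 1) u) (gen (N + 1) (k + 1)), mul_assoc (word (N + 1) u),
        ← gen_braid (by omega)]
      simp only [mul_assoc]
    rw [← ιHB_mul, ← ιHB_mul, hbraid]
    refine word_append_cons_mem_heckeSpan (List.forall_mem_append.2 ⟨?_, by simp⟩) ?_
    · exact fun i hi => (hu i hi).trans k.lt_succ_self
    · simp only [List.mem_cons]
      rintro i (hi | hi)
      exacts [by omega, (hv i hi).trans k.lt_succ_self]

lemma word_mem_heckeSpan_of_sandwich (hsandwich : ∀ v : List ℕ, (∀ i ∈ v, i < k) →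
      ιHB (gen (N + 1) k) * ιHB (word (N + 1) v) * ιHB (gen (N + 1) k) ∈ heckeSpan N k)
    {l : List ℕ} (hl : ∀ i ∈ l, i ≤ k) : ιHB (word (N + 1) l) ∈ heckeSpan N k := by
  induction l using List.reverseRecOn with
  | nil => exact word_mem_heckeSpan_of_lt (u := []) (by simp)
  | append_singleton l i ih =>
    simp only [List.forall_mem_append, List.forall_mem_singleton] at hl
    rw [word_append, ιHB_mul, word_cons, word_nil, mul_one]
    rcases hl.2.lt_or_eq with hi | rfl
    · exact mul_gen_mem_heckeSpan_of_lt hi (ih hl.1)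
    refine (Submodule.span_le (p := (heckeSpan N i).comap
      (LinearMap.mulRight K (ιHB (gen (N + 1) i))))).2 ?_ (ih hl.1)
    rintro _ (⟨u, hu, rfl⟩ | ⟨u, v, hu, hv, rfl⟩) <;>
      simp only [SetLike.mem_coe, Submodule.mem_comap, LinearMap.mulRight_apply]
    · rw [← ιHB_mul]
      simpa using word_append_cons_mem_heckeSpan (N := N) hu (v := []) (by simp)
    · rw [word_append, word_cons, ιHB_mul, ιHB_mul, ← mul_assoc, mul_assoc _ _ (ιHB _),
        mul_assoc]
      exact word_mul_mem_heckeSpan hu (by simpa only [mul_assoc] using hsandwich v hv)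

theorem word_mem_heckeSpan : ∀ {k : ℕ}, k < N → ∀ {l : List ℕ}, (∀ i ∈ l, i ≤ k) →
    ιHB (word (N + 1) l) ∈ heckeSpan N k
  | 0, hk, _, hl => word_mem_heckeSpan_of_sandwich
      (fun _ hv => gen_mul_word_mul_gen_mem_heckeSpan hk fun i hi =>
        absurd (hv i hi) i.not_lt_zero) hl
  | k + 1, hk, _, hl => word_mem_heckeSpan_of_sandwich
      (fun _ hv => gen_mul_mem_mul_gen_mem_heckeSpan hk
        (word_mem_heckeSpan (by omega) fun i hi => Nat.lt_succ_iff.1 (hv i hi))) hl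

end HeckeSpan

open Polynomial in
/-- `𝕂[z] ⊆ 𝕂(z)`, on which `evalz0` is honest evaluation at `z = 0`. -/
def polySubalgebra : Subalgebra K Kz := (IsScalarTower.toAlgHom K K[X] Kz).range

lemma z_mem_polySubalgebra : z ∈ polySubalgebra :=
  ⟨Polynomial.X, RatFunc.algebraMap_X⟩

open Polynomial in
lemma evalz0_algebraMap (p : K[X]) : evalz0 (algebraMap K[X] Kz p) = p.eval 0 := by
  simp [evalz0, Polynomial.eval]

lemma evalz0_z_mul {x : Kz} (hx : x ∈ polySubalgebra) : evalz0 (z * x) = 0 := by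
  obtain ⟨p, rfl⟩ := hx
  rw [z, ← RatFunc.algebraMap_X, AlgHom.toRingHom_eq_coe, RingHom.coe_coe,
    IsScalarTower.coe_toAlgHom', ← map_mul, evalz0_algebraMap]
  simp

open Polynomial in
lemma evalz0_smul_z_mul_add_smul {x : Kz} (hx : x ∈ polySubalgebra) (c d : K) :
    evalz0 (c • (z * x) + d • x) = d * evalz0 x := by
  obtain ⟨p, rfl⟩ := hx
  change evalz0 (c • (z * algebraMap K[X] Kz p) + d • algebraMap K[X] Kz p)
    = d * evalz0 (algebraMap K[X] Kz p)
  have hpoly : c • (z * algebraMap K[X] Kz p) + d • algebraMap K[X] Kz p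
      = algebraMap K[X] Kz (C c * X * p + C d * p) := by
    have hC : ∀ e : K, algebraMap K[X] Kz (C e) = algebraMap K Kz e := fun e => by
      rw [IsScalarTower.algebraMap_apply K K[X] Kz, Polynomial.algebraMap_eq]
    have hsmul : ∀ (e : K) (y : Kz), e • y = algebraMap K Kz e * y :=
      fun e y => Algebra.smul_def (A := Kz) e y
    simp only [map_add, map_mul, hC, RatFunc.algebraMap_X, hsmul, z, mul_assoc]
  rw [hpoly, evalz0_algebraMap, evalz0_algebraMap]
  simp

theorem IsMarkovB.trace_word_mem_polySubalgebra {T : TRBc} (hT : IsMarkovB T)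
    (hnorm : T 0 1 = 1) :
    ∀ {k : ℕ} {l : List ℕ}, (∀ i ∈ l, i < k) →
      T k (ιHB (word (k + 1) l)) ∈ polySubalgebra
  | 0, [], _ => by
    rw [word_nil, show ιHB (1 : BG 1) = 1 by simp only [ιHB, map_one]; rfl, hnorm]
    exact one_mem _
  | 0, i :: _, hl => absurd (hl i List.mem_cons_self) i.not_lt_zero
  | k + 1, l, hl => by
    refine (Submodule.span_le (p := (Subalgebra.toSubmodule polySubalgebra).comap (T (k + 1)))).2
      ?_ (word_mem_heckeSpan (N := k + 1) k.lt_succ_self fun i hi => Nat.lt_succ_iff.1 (hl i hi))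
    rintro _ (⟨u, hu, rfl⟩ | ⟨u, v, hu, hv, rfl⟩) <;>
      simp only [SetLike.mem_coe, Submodule.mem_comap, Subalgebra.mem_toSubmodule]
    · rw [hT.trace_word_of_le hu k.le_succ]
      exact hT.trace_word_mem_polySubalgebra hnorm hu
    · have hvu : ∀ i ∈ v ++ u, i < k := List.forall_mem_append.2 ⟨hv, hu⟩
      rw [← List.singleton_append, ← List.append_assoc, hT.trace_word_append_comm,
        ← List.append_assoc, hT.trace_word_append_gen hvu k.lt_succ_self,
        hT.trace_word_of_le hvu k.le_succ]
      exact mul_mem z_mem_polySubalgebra (hT.trace_word_mem_polySubalgebra hnorm hvu)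

/-- Let `n = m+1 ≥ 2`, `1 ≤ a ≤ n-1`, and let `α, α'` lie in the
submonoid of `B_n` generated by `σ_{a+1}, …, σ_{n-1}`.  Then `tr⁰_n(α σ_a α') = z·tr⁰_n(α α')`;
consequently the evaluation at `z = 0` of `tr⁰_n(α σ_a α')` is `0` and the evaluation at
`z = 0` of `tr⁰_n(α σ_a² α')` is `q` times that of `tr⁰_n(α α')`. -/
theorem statement18 (T : TRBc) (hT : IsMarkovB T) (hnorm : T 0 1 = 1)
    (m : ℕ) (a : ℕ) (ha : 1 ≤ a) (ham : a ≤ m)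
    (α α' : BG (m + 1))
    (hα : α ∈ Submonoid.closure {x : BG (m + 1) | ∃ i : Fin ((m + 1) - 1), a ≤ (i : ℕ) ∧ x = bgen i})
    (hα' : α' ∈ Submonoid.closure {x : BG (m + 1) | ∃ i : Fin ((m + 1) - 1), a ≤ (i : ℕ) ∧ x = bgen i}) :
    T m (ιHB (α * bgen (⟨a - 1, by omega⟩ : Fin ((m + 1) - 1)) * α'))
        = z * T m (ιHB (α * α')) ∧
    evalz0 (T m (ιHB (α * bgen (⟨a - 1, by omega⟩ : Fin ((m + 1) - 1)) * α'))) = 0 ∧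
    evalz0 (T m (ιHB (α * (bgen (⟨a - 1, by omega⟩ : Fin ((m + 1) - 1)) *
          bgen (⟨a - 1, by omega⟩ : Fin ((m + 1) - 1))) * α')))
      = q * evalz0 (T m (ιHB (α * α'))) := by
  obtain ⟨l, hl, rfl⟩ := exists_word_of_mem_closure hα
  obtain ⟨l', hl', rfl⟩ := exists_word_of_mem_closure hα'
  simp only [Nat.add_sub_cancel] at hl hl'
  rw [← gen_of_lt (show a - 1 < m + 1 - 1 by omega)]
  have hmarkov := hT.trace_word_mul_gen_mul_word ha ham hl hl'
  have hpoly : T m (ιHB (word (m + 1) l * word (m + 1) l')) ∈ polySubalgebra := by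
    rw [← word_append]
    exact hT.trace_word_mem_polySubalgebra hnorm fun i hi =>
      ((List.mem_append.1 hi).elim (hl i) (hl' i)).2
  refine ⟨hmarkov, ?_, ?_⟩
  · rw [hmarkov, evalz0_z_mul hpoly]
  · rw [ιHB_mul_gen_mul_gen_mul (by omega), map_add, map_smul, map_smul, hmarkov]
    exact evalz0_smul_z_mul_add_smul hpoly _ _
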